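/- In the chapter-4 setup, let i ≠ j, let β_i be a bounded measurable function of ξ_i = (z₁,…,z_n, y₁,…,y_{i−1}), and assume E[|β_i(ξ_i)| · ‖s_i(θ)‖ · ‖s_j(θ)‖] < ∞. Then for every bounded measurable function w of ξ_j = (z₁,…,z_n, y₁,…,y_{j−1}), E[ w(ξ_j) · β_i(ξ_i) · s_i(θ) s_j(θ)^T ] = 0 (the zero m×m matrix); equivalently, the conditional expectation of β_i(ξ_i) · s_i(θ) s_j(θ)^T given ξ_j vanishes almost surely. -/

import Mathlib

open MeasureTheory
open scoped BigOperators

noncomputable section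

/-- The sample space of the chapter-4 setup: a tuple `ω = (z, y)` with
`z = (z₁,…,z_n)`, `z_{i+1} ∈ ℝ^{bb i}`, and `y = (y₁,…,y_n)`, `y_{i+1} ∈ ℝ^{aa i}`
(index `i : Fin n` stands for the paper's index `i+1`). -/
abbrev SamplePath (aa bb : ℕ → ℕ) (n : ℕ) :=
  ((i : Fin n) → (Fin (bb i.1) → ℝ)) × ((i : Fin n) → (Fin (aa i.1) → ℝ))

/-- The recursively defined states: `x₀` is fixed and
`x_{i+1} = h_{i+1}(x_i, y_{i+1}, z_{i+1})`, where `h i` is the paper's `h_{i+1}`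
(junk value `0` beyond index `n`). -/
def states (kk aa bb : ℕ → ℕ) (n : ℕ) (x₀ : Fin (kk 0) → ℝ)
    (h : (i : ℕ) → (Fin (kk i) → ℝ) → (Fin (aa i) → ℝ) → (Fin (bb i) → ℝ) →
      (Fin (kk (i + 1)) → ℝ))
    (ω : SamplePath aa bb n) : (i : ℕ) → Fin (kk i) → ℝ
  | 0 => x₀
  | (i + 1) =>
    if hi : i < n then
      h i (states kk aa bb n x₀ h ω i) (ω.2 ⟨i, hi⟩) (ω.1 ⟨i, hi⟩)
    else 0

/-!
Let `k = max i j`. The weight `w β s_{min i j}` depends only on `(z, y_{<k})`, and the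
conditional densities `p_l` with `l > k` integrate to one in `y_l`, so the variables
`y_n, …, y_{k+1}` can be integrated out one at a time. To keep each intermediate integrand
integrable on the whole path space, the factor `p_l` of the density is not dropped but replaced
by a fixed probability density on `ℝ^{a_l}`. What remains is `p_k s_k = ∇_θ p_k` against a
function of `(z, y_{<k})`, and its integral over `y_k` is the derivative of `∫ p_k dy_k = 1`,
i.e. zero (differentiation under the integral sign, licensed by the domination hypothesis).
-/

open Filter Topology Function

namespace MeasurableEquiv

variable {ι : Type*} [DecidableEq ι] (π : ι → Type*) [∀ i, MeasurableSpace (π i)]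

def piSplitAt (t : ι) : (∀ i, π i) ≃ᵐ π t × ∀ j : {j // j ≠ t}, π j where
  toEquiv := Equiv.piSplitAt t π
  measurable_toFun :=
    (measurable_pi_apply t).prodMk (measurable_pi_lambda _ fun _ => measurable_pi_apply _)
  measurable_invFun := measurable_pi_lambda _ fun j => by
    change Measurable fun f => (Equiv.piSplitAt t π).symm f j
    simp only [Equiv.piSplitAt_symm_apply]
    split_ifs with h
    · subst h; exact measurable_fst
    · exact (measurable_pi_apply _).comp measurable_snd

variable {π}

theorem piSplitAt_symm_apply_eq_update (t : ι) (v v' : π t) (r : ∀ j : {j // j ≠ t}, π j) :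
    (piSplitAt π t).symm (v, r) = update ((piSplitAt π t).symm (v', r)) t v := by
  funext i
  by_cases h : i = t
  · subst h; simp [piSplitAt, Equiv.piSplitAt]
  · simp [piSplitAt, Equiv.piSplitAt, h]

end MeasurableEquiv

open MeasurableEquiv

theorem volume_preserving_piSplitAt {ι : Type*} [Fintype ι] [DecidableEq ι] (π : ι → Type*)
    [∀ i, MeasureSpace (π i)] [∀ i, SigmaFinite (volume : Measure (π i))] (t : ι) :
    MeasurePreserving (piSplitAt π t) := by
  refine MeasurePreserving.symm _
    ⟨(piSplitAt π t).symm.measurable, (Measure.pi_eq fun s _ => ?_).symm⟩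
  have hpre : (piSplitAt π t).symm ⁻¹' Set.univ.pi s =
      s t ×ˢ Set.univ.pi fun j : {j // j ≠ t} => s j := by
    ext ⟨v, r⟩
    simp only [Set.mem_preimage, Set.mem_pi, Set.mem_univ, true_implies, Set.mem_prod]
    constructor
    · intro h
      refine ⟨by simpa [piSplitAt, Equiv.piSplitAt] using h t, fun j => ?_⟩
      simpa [piSplitAt, Equiv.piSplitAt, j.2] using h j
    · rintro ⟨hv, hr⟩ i
      by_cases h : i = t
      · subst h; simpa [piSplitAt, Equiv.piSplitAt] using hv
      · simpa [piSplitAt, Equiv.piSplitAt, h] using hr ⟨i, h⟩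
  rw [MeasurableEquiv.map_apply, hpre, Measure.volume_eq_prod, Measure.prod_prod, volume_pi_pi,
    Fintype.prod_eq_mul_prod_subtype_ne _ t]

theorem lintegral_ofReal_eq_one_of_integral_eq_one {α : Type*} [MeasurableSpace α]
    {μ : Measure α} {f : α → ℝ} (hf : ∀ a, 0 ≤ f a) (h1 : ∫ a, f a ∂μ = 1) :
    ∫⁻ a, ENNReal.ofReal (f a) ∂μ = 1 := by
  rw [← ofReal_integral_eq_lintegral_ofReal (integrable_of_integral_eq_one h1) (ae_of_all _ hf),
    h1, ENNReal.ofReal_one]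

section UpdateFubini

variable {X ι : Type*} {π : ι → Type*} [DecidableEq ι]

variable (X π) in
def prodPiSplitAt [MeasurableSpace X] [∀ i, MeasurableSpace (π i)] (t : ι) :
    X × (∀ i, π i) ≃ᵐ (X × ∀ j : {j // j ≠ t}, π j) × π t :=
  ((MeasurableEquiv.refl X).prodCongr ((piSplitAt π t).trans MeasurableEquiv.prodComm)).trans
    MeasurableEquiv.prodAssoc.symm

theorem prodPiSplitAt_symm_apply [MeasurableSpace X] [∀ i, MeasurableSpace (π i)] (t : ι)
    (w : X × ∀ j : {j // j ≠ t}, π j) (v : π t) :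
    (prodPiSplitAt X π t).symm (w, v) = (w.1, (piSplitAt π t).symm (v, w.2)) := rfl

variable [Fintype ι] [MeasureSpace X] [SigmaFinite (volume : Measure X)]
  [∀ i, MeasureSpace (π i)] [∀ i, SigmaFinite (volume : Measure (π i))]

theorem volume_preserving_prodPiSplitAt (t : ι) : MeasurePreserving (prodPiSplitAt X π t) :=
  (measurePreserving_prodAssoc volume volume volume).symm.comp
    ((MeasurePreserving.id volume).prod
      (Measure.measurePreserving_swap.comp (volume_preserving_piSplitAt π t)))

theorem lintegral_eq_of_lintegral_update_eq (t : ι) {f g : X × (∀ i, π i) → ENNReal}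
    (hf : AEMeasurable f) (hg : AEMeasurable g)
    (hsec : ∀ ω : X × (∀ i, π i),
      ∫⁻ v, f (ω.1, update ω.2 t v) = ∫⁻ v, g (ω.1, update ω.2 t v)) :
    ∫⁻ ω, f ω = ∫⁻ ω, g ω := by
  have hE := (volume_preserving_prodPiSplitAt (X := X) (π := π) t).symm
  have hsplit : ∀ f : X × (∀ i, π i) → ENNReal, AEMeasurable f →
      ∫⁻ ω, f ω = ∫⁻ w, ∫⁻ v, f ((prodPiSplitAt X π t).symm (w, v)) := fun f hf => by
    rw [← hE.lintegral_comp_emb (MeasurableEquiv.measurableEmbedding _), Measure.volume_eq_prod]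
    exact lintegral_prod _ (hf.comp_quasiMeasurePreserving hE.quasiMeasurePreserving)
  rw [hsplit f hf, hsplit g hg]
  congr 1 with w
  rcases isEmpty_or_nonempty (π t) with _ | ⟨⟨v₀⟩⟩
  · simp
  simpa only [prodPiSplitAt_symm_apply, ← piSplitAt_symm_apply_eq_update] using
    hsec ((prodPiSplitAt X π t).symm (w, v₀))

theorem integral_eq_of_integral_update_eq (t : ι) {f g : X × (∀ i, π i) → ℝ}
    (hf : Integrable f) (hg : Integrable g)
    (hsec : ∀ ω : X × (∀ i, π i),
      ∫ v, f (ω.1, update ω.2 t v) = ∫ v, g (ω.1, update ω.2 t v)) :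
    ∫ ω, f ω = ∫ ω, g ω := by
  have hE := (volume_preserving_prodPiSplitAt (X := X) (π := π) t).symm
  have hsplit : ∀ f : X × (∀ i, π i) → ℝ, Integrable f →
      ∫ ω, f ω = ∫ w, ∫ v, f ((prodPiSplitAt X π t).symm (w, v)) := fun f hf => by
    rw [← hE.integral_comp', Measure.volume_eq_prod]
    exact integral_prod _ ((hE.integrable_comp_emb (MeasurableEquiv.measurableEmbedding _)).2 hf)
  rw [hsplit f hf, hsplit g hg]
  congr 1 with w
  rcases isEmpty_or_nonempty (π t) with _ | ⟨⟨v₀⟩⟩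
  · simp [integral_of_isEmpty]
  simpa only [prodPiSplitAt_symm_apply, ← piSplitAt_symm_apply_eq_update] using
    hsec ((prodPiSplitAt X π t).symm (w, v₀))

theorem integrable_mul_and_integral_mul_eq_of_integral_update_eq_one (t : ι)
    {q₁ q₂ R : X × (∀ i, π i) → ℝ} (hq₁ : ∀ ω, 0 ≤ q₁ ω) (hq₂ : ∀ ω, 0 ≤ q₂ ω)
    (hq₁_one : ∀ ω : X × (∀ i, π i), ∫ v, q₁ (ω.1, update ω.2 t v) = 1)
    (hq₂_one : ∀ ω : X × (∀ i, π i), ∫ v, q₂ (ω.1, update ω.2 t v) = 1)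
    (hR : ∀ ω v, R (ω.1, update ω.2 t v) = R ω)
    (hmeas : AEStronglyMeasurable fun ω => q₂ ω * R ω) (hint : Integrable fun ω => q₁ ω * R ω) :
    Integrable (fun ω => q₂ ω * R ω) ∧ ∫ ω, q₂ ω * R ω = ∫ ω, q₁ ω * R ω := by
  have hsec_enorm : ∀ q : X × (∀ i, π i) → ℝ, (∀ ω, 0 ≤ q ω) →
      (∀ ω : X × (∀ i, π i), ∫ v, q (ω.1, update ω.2 t v) = 1) →
      ∀ ω, ∫⁻ v, ‖q (ω.1, update ω.2 t v) * R (ω.1, update ω.2 t v)‖ₑ = ‖R ω‖ₑ :=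
    fun q hq hq_one ω => by
      simp_rw [hR, enorm_mul, Real.enorm_of_nonneg (hq _)]
      rw [lintegral_mul_const' _ _ enorm_ne_top,
        lintegral_ofReal_eq_one_of_integral_eq_one (fun _ => hq _) (hq_one ω), one_mul]
  have hsec : ∀ q : X × (∀ i, π i) → ℝ,
      (∀ ω : X × (∀ i, π i), ∫ v, q (ω.1, update ω.2 t v) = 1) →
      ∀ ω, ∫ v, q (ω.1, update ω.2 t v) * R (ω.1, update ω.2 t v) = R ω :=
    fun q hq_one ω => by simp_rw [hR, integral_mul_const, hq_one, one_mul]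
  have hint₂ : Integrable fun ω => q₂ ω * R ω := by
    refine ⟨hmeas, ?_⟩
    rw [HasFiniteIntegral, lintegral_eq_of_lintegral_update_eq t hmeas.enorm hint.1.enorm
      fun ω => by rw [hsec_enorm q₂ hq₂ hq₂_one, hsec_enorm q₁ hq₁ hq₁_one]]
    exact hint.2
  exact ⟨hint₂, integral_eq_of_integral_update_eq t hint₂ hint
    fun ω => by rw [hsec q₂ hq₂_one, hsec q₁ hq₁_one]⟩

theorem integral_mul_eq_zero_of_integral_update_eq_zero (t : ι) {D R : X × (∀ i, π i) → ℝ}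
    (hD : ∀ ω : X × (∀ i, π i), ∫ v, D (ω.1, update ω.2 t v) = 0)
    (hR : ∀ ω v, R (ω.1, update ω.2 t v) = R ω) (hint : Integrable fun ω => D ω * R ω) :
    ∫ ω, D ω * R ω = 0 := by
  simpa using integral_eq_of_integral_update_eq t hint (integrable_zero _ _ _)
    fun ω => by simp_rw [hR, integral_mul_const, hD, zero_mul, Pi.zero_apply, integral_zero]

end UpdateFubini

theorem DependsOn.apply_update_of_notMem {ι β : Type*} [DecidableEq ι] {α : ι → Type*}
    {f : (∀ i, α i) → β} {s : Set ι} (hf : DependsOn f s) {t : ι} (ht : t ∉ s) (x : ∀ i, α i)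
    (v : α t) : f (Function.update x t v) = f x :=
  hf fun i hi => Function.update_of_ne (fun (h : i = t) => ht (h ▸ hi)) v x

theorem exists_pos_integral_eq_one {α : Type*} [MeasurableSpace α] (μ : Measure α)
    [SigmaFinite μ] [NeZero μ] : ∃ φ : α → ℝ, (∀ x, 0 < φ x) ∧ Measurable φ ∧ ∫ x, φ x ∂μ = 1 := by
  obtain ⟨w, hw_pos, hw_meas, hw_lt⟩ := exists_pos_lintegral_lt_of_sigmaFinite μ one_ne_zero
  set c := ∫⁻ x, (w x : ENNReal) ∂μ
  have hc0 : c ≠ 0 := by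
    have hsupp : Function.support (fun x => (w x : ENNReal)) = Set.univ :=
      Function.support_eq_univ fun x => by simpa using (hw_pos x).ne'
    rw [← pos_iff_ne_zero, lintegral_pos_iff_support (by fun_prop), hsupp]
    exact Measure.measure_univ_pos.2 (NeZero.ne μ)
  have hc : 0 < c.toReal := ENNReal.toReal_pos hc0 hw_lt.ne_top
  refine ⟨fun x => w x / c.toReal, fun x => div_pos (hw_pos x) hc,
    (measurable_coe_nnreal_real.comp hw_meas).div_const _, ?_⟩
  have hw_int := integral_toReal (μ := μ) (f := fun x => (w x : ENNReal)) (by fun_prop)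
    (ae_of_all _ fun _ => ENNReal.coe_lt_top)
  simp only [ENNReal.coe_toReal] at hw_int
  rw [integral_div, hw_int, div_self hc.ne']

theorem integrable_mul_mul_apply_mul_apply {Ω E : Type*} [MeasurableSpace Ω] {μ : Measure Ω}
    [NormedAddCommGroup E] [NormedSpace ℝ E] {ρ b w : Ω → ℝ} {L L' : Ω → E →L[ℝ] ℝ} {C : ℝ}
    {e e' : E} (hint : Integrable (fun ω => ρ ω * (|b ω| * (‖L ω‖ * ‖L' ω‖))) μ)
    (hmeas : AEStronglyMeasurable (fun ω => ρ ω * (w ω * b ω * (L ω e * L' ω e'))) μ)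
    (hw : ∀ ω, |w ω| ≤ C) :
    Integrable (fun ω => ρ ω * (w ω * b ω * (L ω e * L' ω e'))) μ := by
  refine (hint.norm.const_mul (C * (‖e‖ * ‖e'‖))).mono' hmeas (ae_of_all _ fun ω => ?_)
  have hC : 0 ≤ C := (abs_nonneg _).trans (hw ω)
  simp only [norm_mul, Real.norm_eq_abs, abs_abs, abs_norm]
  calc _ ≤ |ρ ω| * (C * |b ω| * (‖L ω‖ * ‖e‖ * (‖L' ω‖ * ‖e'‖))) := by
        gcongr
        exacts [hw ω, (L ω).le_opNorm e, (L' ω).le_opNorm e']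
    _ = _ := by ring

section ParametricDerivative

variable {α E : Type*} [MeasurableSpace α] [NormedAddCommGroup E] [NormedSpace ℝ E]

theorem measurable_fderiv_apply_of_measurable_apply {T : α → E → ℝ}
    (hT : ∀ θ, Measurable fun a => T a θ) (hdiff : ∀ a, Differentiable ℝ (T a)) (θ e : E) :
    Measurable fun a => fderiv ℝ (T a) θ e := by
  have hlim : ∀ a, Tendsto (fun k : ℕ => (k : ℝ) • (T a (θ + (k : ℝ)⁻¹ • e) - T a θ)) atTop
      (𝓝 (fderiv ℝ (T a) θ e)) := fun a =>
    (hdiff a θ).hasFDerivAt.lim e (by simpa using tendsto_natCast_atTop_atTop (R := ℝ))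
  exact measurable_of_tendsto_metrizable
    (f := fun (k : ℕ) a => (k : ℝ) • (T a (θ + (k : ℝ)⁻¹ • e) - T a θ))
    (fun k => by fun_prop) (tendsto_pi_nhds.2 hlim)

theorem integral_fderiv_apply_eq_zero_of_integral_eq_one {μ : Measure α} {P : α → E → ℝ}
    (hdiff : ∀ y, Differentiable ℝ (P y)) (hmeas : ∀ θ, Measurable fun y => P y θ)
    (hone : ∀ θ, ∫ y, P y θ ∂μ = 1) {θ : E} {ε : ℝ} (hε : 0 < ε) {g : α → ℝ}
    (hg : Integrable g μ) (hbound : ∀ y θ', dist θ' θ < ε → ‖fderiv ℝ (P y) θ'‖ ≤ g y)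
    (e : E) :
    ∫ y, fderiv ℝ (P y) θ e ∂μ = 0 := by
  have hline : ∀ y s,
      HasDerivAt (fun s : ℝ => P y (θ + s • e)) (fderiv ℝ (P y) (θ + s • e) e) s :=
    fun y s => (hdiff y _).hasFDerivAt.comp_hasDerivAt s
      (((hasDerivAt_id s).smul_const e).const_add θ |>.congr_deriv (one_smul ℝ e))
  have hδ : 0 < ε / (‖e‖ + 1) := by positivity
  have hdom : ∀ y, ∀ s ∈ Metric.ball (0 : ℝ) (ε / (‖e‖ + 1)),
      ‖fderiv ℝ (P y) (θ + s • e) e‖ ≤ g y * ‖e‖ := fun y s hs => by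
    have hclose : dist (θ + s • e) θ < ε := by
      rw [mem_ball_zero_iff, lt_div_iff₀ (by positivity)] at hs
      rw [dist_eq_norm, add_sub_cancel_left, norm_smul]
      nlinarith [norm_nonneg e, norm_nonneg s]
    exact ((fderiv ℝ (P y) _).le_opNorm e).trans
      (mul_le_mul_of_nonneg_right (hbound y _ hclose) (norm_nonneg e))
  have hderiv := (hasDerivAt_integral_of_dominated_loc_of_deriv_le (μ := μ) (x₀ := 0)
    (Metric.ball_mem_nhds _ hδ) (Eventually.of_forall fun s => (hmeas _).aestronglyMeasurable)
    (integrable_of_integral_eq_one (hone _))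
    (measurable_fderiv_apply_of_measurable_apply hmeas hdiff _ e).aestronglyMeasurable
    (Eventually.of_forall hdom) (hg.mul_const _)
    (Eventually.of_forall fun y s _ => hline y s)).2
  simp only [hone, zero_smul, add_zero] at hderiv
  exact hderiv.unique (hasDerivAt_const 0 1)

end ParametricDerivative

section HybridDensity

variable {X : Type*} {n : ℕ} {π : Fin n → Type*} {P : Fin n → X × (∀ l, π l) → ℝ}
  {φ : ∀ l, π l → ℝ}

def hybridFactor (P : Fin n → X × (∀ l, π l) → ℝ) (φ : ∀ l, π l → ℝ) (t : ℕ) (l : Fin n)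
    (ω : X × (∀ l, π l)) : ℝ :=
  if l.1 < t then P l ω else φ l (ω.2 l)

def hybridDensity (P : Fin n → X × (∀ l, π l) → ℝ) (φ : ∀ l, π l → ℝ) (t : ℕ)
    (ω : X × (∀ l, π l)) : ℝ :=
  ∏ l, hybridFactor P φ t l ω

theorem hybridDensity_of_le {t : ℕ} (ht : n ≤ t) (ω : X × (∀ l, π l)) :
    hybridDensity P φ t ω = ∏ l, P l ω :=
  Finset.prod_congr rfl fun l _ => if_pos (l.2.trans_le ht)

theorem hybridDensity_succ (t : Fin n) (ω : X × (∀ l, π l)) :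
    hybridDensity P φ (t + 1) ω = P t ω * ∏ l ∈ Finset.univ.erase t, hybridFactor P φ t l ω := by
  rw [hybridDensity, ← Finset.mul_prod_erase _ _ (Finset.mem_univ t), hybridFactor,
    if_pos t.1.lt_succ_self]
  congr 1
  refine Finset.prod_congr rfl fun l hl => ?_
  have hlt : l.1 ≠ t.1 := Fin.val_ne_of_ne (Finset.ne_of_mem_erase hl)
  simp only [hybridFactor, Nat.lt_succ_iff_lt_or_eq, hlt, or_false]

theorem hybridDensity_self (t : Fin n) (ω : X × (∀ l, π l)) :
    hybridDensity P φ t ω = φ t (ω.2 t) * ∏ l ∈ Finset.univ.erase t, hybridFactor P φ t l ω := by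
  rw [hybridDensity, ← Finset.mul_prod_erase _ _ (Finset.mem_univ t), hybridFactor,
    if_neg (lt_irrefl _)]

theorem prod_erase_hybridFactor_update (hP : ∀ l x, DependsOn (fun y => P l (x, y)) (Set.Iic l))
    (t : Fin n) (ω : X × (∀ l, π l)) (v : π t) :
    ∏ l ∈ Finset.univ.erase t, hybridFactor P φ t l (ω.1, update ω.2 t v) =
      ∏ l ∈ Finset.univ.erase t, hybridFactor P φ t l ω := by
  refine Finset.prod_congr rfl fun l hl => ?_
  simp only [hybridFactor]
  split_ifs with hlt
  · exact (hP l ω.1).apply_update_of_notMem (fun h : t ≤ l => absurd hlt (not_lt.2 h)) ω.2 v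
  · rw [update_of_ne (Finset.ne_of_mem_erase hl)]

theorem measurable_hybridDensity [MeasurableSpace X] [∀ l, MeasurableSpace (π l)]
    (hP : ∀ l, Measurable (P l)) (hφ : ∀ l, Measurable (φ l)) (t : ℕ) :
    Measurable (hybridDensity P φ t) := by
  refine Finset.measurable_prod _ fun l _ => ?_
  unfold hybridFactor
  split_ifs
  exacts [hP l, (hφ l).comp ((measurable_pi_apply l).comp measurable_snd)]

variable [MeasureSpace X] [SigmaFinite (volume : Measure X)]
  [∀ l, MeasureSpace (π l)] [∀ l, SigmaFinite (volume : Measure (π l))]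

theorem integrable_and_integral_hybridDensity_mul_of_le (hP_nonneg : ∀ l ω, 0 ≤ P l ω)
    (hP_meas : ∀ l, Measurable (P l)) (hP_dep : ∀ l x, DependsOn (fun y => P l (x, y)) (Set.Iic l))
    (hP_one : ∀ l (ω : X × (∀ l, π l)), ∫ v, P l (ω.1, update ω.2 l v) = 1)
    (hφ_nonneg : ∀ l v, 0 ≤ φ l v) (hφ_meas : ∀ l, Measurable (φ l))
    (hφ_one : ∀ l, ∫ v, φ l v = 1) {F : X × (∀ l, π l) → ℝ} (hF_meas : AEStronglyMeasurable F)
    {k : ℕ} (hk : k ≤ n) (hF_dep : ∀ x, DependsOn (fun y => F (x, y)) {l | l.1 < k})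
    (hint : Integrable fun ω => hybridDensity P φ n ω * F ω) :
    Integrable (fun ω => hybridDensity P φ k ω * F ω) ∧
      ∫ ω, hybridDensity P φ k ω * F ω = ∫ ω, hybridDensity P φ n ω * F ω := by
  revert hF_dep
  induction hk using Nat.decreasingInduction with
  | self => exact fun _ => ⟨hint, rfl⟩
  | of_succ t ht ih =>
    intro hF_dep
    obtain ⟨ih_int, ih_eq⟩ := ih fun x => (hF_dep x).mono fun l hl => Nat.lt_succ_of_lt hl
    set R : X × (∀ l, π l) → ℝ :=
      fun ω => (∏ l ∈ Finset.univ.erase ⟨t, ht⟩, hybridFactor P φ t l ω) * F ω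
    have hR : ∀ ω v, R (ω.1, update ω.2 ⟨t, ht⟩ v) = R ω := fun ω v => by
      simp only [R]
      rw [prod_erase_hybridFactor_update hP_dep,
        (hF_dep ω.1).apply_update_of_notMem (lt_irrefl t)]
    have hsucc : ∀ ω, hybridDensity P φ (t + 1) ω * F ω = P ⟨t, ht⟩ ω * R ω := fun ω => by
      rw [hybridDensity_succ ⟨t, ht⟩, mul_assoc]
    have hself : ∀ ω, hybridDensity P φ t ω * F ω = φ ⟨t, ht⟩ (ω.2 ⟨t, ht⟩) * R ω := fun ω => by
      rw [hybridDensity_self ⟨t, ht⟩, mul_assoc]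
    simp only [hsucc] at ih_int ih_eq
    simp only [hself, ← ih_eq]
    refine integrable_mul_and_integral_mul_eq_of_integral_update_eq_one ⟨t, ht⟩
      (fun ω => hP_nonneg _ ω) (fun ω => hφ_nonneg _ _) (hP_one _)
      (fun ω => by simpa using hφ_one _) hR ?_ ih_int
    exact ((measurable_hybridDensity hP_meas hφ_meas t).aestronglyMeasurable.mul hF_meas).congr
      (ae_of_all _ hself)

theorem integral_prod_mul_mul_div_eq_zero [∀ l, NeZero (volume : Measure (π l))]
    (hP_pos : ∀ l ω, 0 < P l ω) (hP_meas : ∀ l, Measurable (P l))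
    (hP_dep : ∀ l x, DependsOn (fun y => P l (x, y)) (Set.Iic l))
    (hP_one : ∀ l (ω : X × (∀ l, π l)), ∫ v, P l (ω.1, update ω.2 l v) = 1)
    (k : Fin n) {F D : X × (∀ l, π l) → ℝ}
    (hF_dep : ∀ x, DependsOn (fun y => F (x, y)) (Set.Iio k))
    (hD_dep : ∀ x, DependsOn (fun y => D (x, y)) (Set.Iic k))
    (hD_zero : ∀ ω : X × (∀ l, π l), ∫ v, D (ω.1, update ω.2 k v) = 0)
    (hmeas : AEStronglyMeasurable fun ω => F ω * (D ω / P k ω))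
    (hint : Integrable fun ω => (∏ l, P l ω) * (F ω * (D ω / P k ω))) :
    ∫ ω, (∏ l, P l ω) * (F ω * (D ω / P k ω)) = 0 := by
  choose φ hφ_pos hφ_meas hφ_one using
    fun l => exists_pos_integral_eq_one (volume : Measure (π l))
  have hG_dep : ∀ x,
      DependsOn (fun y => F (x, y) * (D (x, y) / P k (x, y))) {l | l.1 < k.1 + 1} :=
    fun x y y' h => by
      have h' : ∀ l ∈ Set.Iic k, y l = y' l := fun l hl => h l (Nat.lt_succ_of_le hl)
      exact congrArg₂ (· * ·) (hF_dep x fun l (hl : l < k) => h' l hl.le)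
        (congrArg₂ (· / ·) (hD_dep x h') (hP_dep k x h'))
  simp only [← hybridDensity_of_le (φ := φ) le_rfl] at hint ⊢
  obtain ⟨hint_k, heq_k⟩ := integrable_and_integral_hybridDensity_mul_of_le
    (fun l ω => (hP_pos l ω).le) hP_meas hP_dep hP_one (fun l v => (hφ_pos l v).le) hφ_meas
    hφ_one hmeas k.2 hG_dep hint
  have hcancel : ∀ ω, hybridDensity P φ (k + 1) ω * (F ω * (D ω / P k ω)) =
      D ω * ((∏ l ∈ Finset.univ.erase k, hybridFactor P φ k l ω) * F ω) := fun ω => by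
    rw [hybridDensity_succ]
    field_simp [(hP_pos k ω).ne']
  simp only [hcancel] at hint_k heq_k
  rw [← heq_k]
  refine integral_mul_eq_zero_of_integral_update_eq_zero k hD_zero (fun ω v => ?_) hint_k
  rw [prod_erase_hybridFactor_update hP_dep, (hF_dep ω.1).apply_update_of_notMem (lt_irrefl k)]

theorem integral_prod_mul_mul_div_mul_div_eq_zero [∀ l, NeZero (volume : Measure (π l))]
    (hP_pos : ∀ l ω, 0 < P l ω) (hP_meas : ∀ l, Measurable (P l))
    (hP_dep : ∀ l x, DependsOn (fun y => P l (x, y)) (Set.Iic l))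
    (hP_one : ∀ l (ω : X × (∀ l, π l)), ∫ v, P l (ω.1, update ω.2 l v) = 1)
    {i j : Fin n} (hij : i ≠ j) {B Dᵢ Dⱼ : X × (∀ l, π l) → ℝ}
    (hB_dep : ∀ x, DependsOn (fun y => B (x, y)) (Set.Iio (max i j)))
    (hDᵢ_dep : ∀ x, DependsOn (fun y => Dᵢ (x, y)) (Set.Iic i))
    (hDⱼ_dep : ∀ x, DependsOn (fun y => Dⱼ (x, y)) (Set.Iic j))
    (hDᵢ_zero : ∀ ω : X × (∀ l, π l), ∫ v, Dᵢ (ω.1, update ω.2 i v) = 0)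
    (hDⱼ_zero : ∀ ω : X × (∀ l, π l), ∫ v, Dⱼ (ω.1, update ω.2 j v) = 0)
    (hmeas : AEStronglyMeasurable fun ω => B ω * (Dᵢ ω / P i ω) * (Dⱼ ω / P j ω))
    (hint : Integrable fun ω => (∏ l, P l ω) * (B ω * (Dᵢ ω / P i ω) * (Dⱼ ω / P j ω))) :
    ∫ ω, (∏ l, P l ω) * (B ω * (Dᵢ ω / P i ω) * (Dⱼ ω / P j ω)) = 0 := by
  wlog hlt : i < j generalizing i j Dᵢ Dⱼ
  · have hswap : ∀ ω, B ω * (Dᵢ ω / P i ω) * (Dⱼ ω / P j ω) =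
        B ω * (Dⱼ ω / P j ω) * (Dᵢ ω / P i ω) := fun ω => by ring
    simp only [hswap] at hmeas hint ⊢
    exact this hij.symm (by rwa [max_comm]) hDⱼ_dep hDᵢ_dep hDⱼ_zero hDᵢ_zero hmeas hint
      ((not_lt.1 hlt).lt_of_ne hij.symm)
  rw [max_eq_right hlt.le] at hB_dep
  refine integral_prod_mul_mul_div_eq_zero hP_pos hP_meas hP_dep hP_one j
    (F := fun ω => B ω * (Dᵢ ω / P i ω)) (fun x y y' hy => ?_) hDⱼ_dep hDⱼ_zero hmeas hint
  have hyi : ∀ l ∈ Set.Iic i, y l = y' l := fun l (hl : l ≤ i) => hy l (hl.trans_lt hlt)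
  exact congrArg₂ (· * ·) (hB_dep x hy) (congrArg₂ (· / ·) (hDᵢ_dep x hyi) (hP_dep i x hyi))

end HybridDensity

section StateSpaceModel

variable {kk aa bb : ℕ → ℕ} {n m : ℕ} (x₀ : Fin (kk 0) → ℝ)
  (h : (i : ℕ) → (Fin (kk i) → ℝ) → (Fin (aa i) → ℝ) → (Fin (bb i) → ℝ) → (Fin (kk (i + 1)) → ℝ))

theorem states_congr (z : (i : Fin n) → Fin (bb i.1) → ℝ)
    {y y' : (i : Fin n) → Fin (aa i.1) → ℝ} (a : ℕ) (hy : ∀ l : Fin n, l.1 < a → y l = y' l) :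
    states kk aa bb n x₀ h (z, y) a = states kk aa bb n x₀ h (z, y') a := by
  induction a with
  | zero => rfl
  | succ a ih =>
    simp only [states]
    split_ifs with ha
    · rw [ih fun l hl => hy l (Nat.lt_succ_of_lt hl), hy ⟨a, ha⟩ a.lt_succ_self]
    · rfl

theorem measurable_states
    (hh : ∀ i, Measurable fun q : (Fin (kk i) → ℝ) × (Fin (aa i) → ℝ) × (Fin (bb i) → ℝ) =>
      h i q.1 q.2.1 q.2.2) (a : ℕ) :
    Measurable fun ω : SamplePath aa bb n => states kk aa bb n x₀ h ω a := by
  induction a with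
  | zero => exact measurable_const
  | succ a ih =>
    simp only [states]
    split_ifs with ha
    · let l : Fin n := ⟨a, ha⟩
      exact (hh a).comp (ih.prodMk (((measurable_pi_apply l).comp measurable_snd).prodMk
        ((measurable_pi_apply l).comp measurable_fst)))
    · exact measurable_const

def pathDensity
    (p : (i : ℕ) → (Fin (aa i) → ℝ) → (Fin (kk i) → ℝ) → (Fin (bb i) → ℝ) → (Fin m → ℝ) → ℝ)
    (l : Fin n) (ω : SamplePath aa bb n) : (Fin m → ℝ) → ℝ :=
  p l.1 (ω.2 l) (states kk aa bb n x₀ h ω l.1) (ω.1 l)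

variable (p : (i : ℕ) → (Fin (aa i) → ℝ) → (Fin (kk i) → ℝ) → (Fin (bb i) → ℝ) → (Fin m → ℝ) → ℝ)

theorem pathDensity_dependsOn (l : Fin n) (z : (i : Fin n) → Fin (bb i.1) → ℝ) :
    DependsOn (fun y => pathDensity x₀ h p l (z, y)) (Set.Iic l) := fun y y' (hy : ∀ t ≤ l, _) => by
  simp only [pathDensity]
  rw [hy l le_rfl, states_congr x₀ h z l.1 fun t (ht : t.1 < l.1) => hy t ht.le]

theorem pathDensity_update_self (l : Fin n) (ω : SamplePath aa bb n) (v : Fin (aa l.1) → ℝ) :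
    pathDensity x₀ h p l (ω.1, update ω.2 l v) =
      p l.1 v (states kk aa bb n x₀ h ω l.1) (ω.1 l) := by
  simp only [pathDensity, update_self]
  rw [states_congr x₀ h ω.1 l.1 fun t (ht : t.1 < l.1) => update_of_ne (Fin.ne_of_lt ht) v ω.2]

theorem measurable_pathDensity
    (hh : ∀ i, Measurable fun q : (Fin (kk i) → ℝ) × (Fin (aa i) → ℝ) × (Fin (bb i) → ℝ) =>
      h i q.1 q.2.1 q.2.2)
    (hp : ∀ i θ', Measurable fun q : (Fin (aa i) → ℝ) × (Fin (kk i) → ℝ) × (Fin (bb i) → ℝ) =>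
      p i q.1 q.2.1 q.2.2 θ')
    (l : Fin n) (θ' : Fin m → ℝ) : Measurable fun ω => pathDensity x₀ h p l ω θ' :=
  (hp l.1 θ').comp (((measurable_pi_apply l).comp measurable_snd).prodMk
    ((measurable_states x₀ h hh l.1).prodMk ((measurable_pi_apply l).comp measurable_fst)))

theorem integral_pathDensity_update (hp_norm : ∀ i xx z θ', ∫ y, p i y xx z θ' = 1) (l : Fin n)
    (ω : SamplePath aa bb n) (θ' : Fin m → ℝ) :
    ∫ v, pathDensity x₀ h p l (ω.1, update ω.2 l v) θ' = 1 := by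
  simpa only [pathDensity_update_self] using hp_norm l.1 (states kk aa bb n x₀ h ω l.1) (ω.1 l) θ'

theorem integral_fderiv_pathDensity_update_eq_zero
    (hp_diff : ∀ i y xx z, Differentiable ℝ (p i y xx z))
    (hp_meas : ∀ i θ', Measurable fun q : (Fin (aa i) → ℝ) × (Fin (kk i) → ℝ) × (Fin (bb i) → ℝ) =>
      p i q.1 q.2.1 q.2.2 θ')
    (hp_norm : ∀ i xx z θ', ∫ y, p i y xx z θ' = 1) {θ : Fin m → ℝ} {ε : ℝ} (hε : 0 < ε)
    {g : (i : ℕ) → (Fin (kk i) → ℝ) → (Fin (bb i) → ℝ) → (Fin (aa i) → ℝ) → ℝ}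
    (hg_int : ∀ i xx z, Integrable (g i xx z))
    (hg_bd : ∀ i y xx z, ∀ θ' : Fin m → ℝ, dist θ' θ < ε → ‖fderiv ℝ (p i y xx z) θ'‖ ≤ g i xx z y)
    (l : Fin n) (ω : SamplePath aa bb n) (e : Fin m → ℝ) :
    ∫ v, fderiv ℝ (pathDensity x₀ h p l (ω.1, update ω.2 l v)) θ e = 0 := by
  simp only [pathDensity_update_self]
  exact integral_fderiv_apply_eq_zero_of_integral_eq_one
    (P := fun v => p l.1 v (states kk aa bb n x₀ h ω l.1) (ω.1 l)) (fun v => hp_diff _ _ _ _)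
    (fun θ' => (hp_meas l θ').comp (measurable_id.prodMk (measurable_const (a := (_, ω.1 l)))))
    (fun θ' => hp_norm _ _ _ θ') hε (hg_int _ _ _) (fun v θ' hθ' => hg_bd _ v _ _ θ' hθ') e

def pathScore (θ : Fin m → ℝ) (l : Fin n) (ω : SamplePath aa bb n) : (Fin m → ℝ) →L[ℝ] ℝ :=
  fderiv ℝ (fun t => Real.log (pathDensity x₀ h p l ω t)) θ

theorem pathScore_apply (hp_pos : ∀ i y xx z θ', 0 < p i y xx z θ')
    (hp_diff : ∀ i y xx z, Differentiable ℝ (p i y xx z)) (θ : Fin m → ℝ) (l : Fin n)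
    (ω : SamplePath aa bb n) (e : Fin m → ℝ) :
    pathScore x₀ h p θ l ω e =
      fderiv ℝ (pathDensity x₀ h p l ω) θ e / pathDensity x₀ h p l ω θ := by
  rw [pathScore,
    fderiv.log (f := pathDensity x₀ h p l ω) (hp_diff _ _ _ _ θ) (hp_pos _ _ _ _ _).ne']
  exact inv_mul_eq_div _ _

theorem measurable_pathScore_apply
    (hh : ∀ i, Measurable fun q : (Fin (kk i) → ℝ) × (Fin (aa i) → ℝ) × (Fin (bb i) → ℝ) =>
      h i q.1 q.2.1 q.2.2)
    (hp_pos : ∀ i y xx z θ', 0 < p i y xx z θ')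
    (hp_diff : ∀ i y xx z, Differentiable ℝ (p i y xx z))
    (hp_meas : ∀ i θ', Measurable fun q : (Fin (aa i) → ℝ) × (Fin (kk i) → ℝ) × (Fin (bb i) → ℝ) =>
      p i q.1 q.2.1 q.2.2 θ')
    (θ : Fin m → ℝ) (l : Fin n) (e : Fin m → ℝ) :
    Measurable fun ω : SamplePath aa bb n => pathScore x₀ h p θ l ω e := by
  simp only [pathScore_apply x₀ h p hp_pos hp_diff]
  exact (measurable_fderiv_apply_of_measurable_apply (measurable_pathDensity x₀ h p hh hp_meas l)
    (fun ω => hp_diff _ _ _ _) θ e).div (measurable_pathDensity x₀ h p hh hp_meas l θ)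

theorem integral_prod_pathDensity_mul_pathScore_mul_pathScore_eq_zero
    (hh : ∀ i, Measurable fun q : (Fin (kk i) → ℝ) × (Fin (aa i) → ℝ) × (Fin (bb i) → ℝ) =>
      h i q.1 q.2.1 q.2.2)
    (hp_pos : ∀ i y xx z θ', 0 < p i y xx z θ')
    (hp_diff : ∀ i y xx z, Differentiable ℝ (p i y xx z))
    (hp_meas : ∀ i θ', Measurable fun q : (Fin (aa i) → ℝ) × (Fin (kk i) → ℝ) × (Fin (bb i) → ℝ) =>
      p i q.1 q.2.1 q.2.2 θ')
    (hp_norm : ∀ i xx z θ', ∫ y, p i y xx z θ' = 1) {θ : Fin m → ℝ} {ε : ℝ} (hε : 0 < ε)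
    {g : (i : ℕ) → (Fin (kk i) → ℝ) → (Fin (bb i) → ℝ) → (Fin (aa i) → ℝ) → ℝ}
    (hg_int : ∀ i xx z, Integrable (g i xx z))
    (hg_bd : ∀ i y xx z, ∀ θ' : Fin m → ℝ, dist θ' θ < ε → ‖fderiv ℝ (p i y xx z) θ'‖ ≤ g i xx z y)
    {i j : Fin n} (hij : i ≠ j) {B : SamplePath aa bb n → ℝ} (hB_meas : AEStronglyMeasurable B)
    (hB_dep : ∀ z, DependsOn (fun y => B (z, y)) (Set.Iio (max i j))) (e e' : Fin m → ℝ)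
    (hint : Integrable fun ω => (∏ l, pathDensity x₀ h p l ω θ) *
      (B ω * pathScore x₀ h p θ i ω e * pathScore x₀ h p θ j ω e')) :
    ∫ ω, (∏ l, pathDensity x₀ h p l ω θ) *
      (B ω * pathScore x₀ h p θ i ω e * pathScore x₀ h p θ j ω e') = 0 := by
  have hscore_meas := measurable_pathScore_apply (n := n) x₀ h p hh hp_pos hp_diff hp_meas θ
  have hmeas : AEStronglyMeasurable fun ω =>
      B ω * pathScore x₀ h p θ i ω e * pathScore x₀ h p θ j ω e' :=
    (hB_meas.mul (hscore_meas i e).aestronglyMeasurable).mul (hscore_meas j e').aestronglyMeasurable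
  have hD_dep : ∀ (l : Fin n) e z,
      DependsOn (fun y => fderiv ℝ (pathDensity x₀ h p l (z, y)) θ e) (Set.Iic l) :=
    fun l e z _ _ hy => congrArg (fderiv ℝ · θ e) (pathDensity_dependsOn x₀ h p l z hy)
  have hD_zero := integral_fderiv_pathDensity_update_eq_zero (n := n) x₀ h p hp_diff hp_meas
    hp_norm hε hg_int hg_bd
  simp only [pathScore_apply x₀ h p hp_pos hp_diff] at hmeas hint ⊢
  exact integral_prod_mul_mul_div_mul_div_eq_zero (P := fun l ω => pathDensity x₀ h p l ω θ)
    (fun l ω => hp_pos _ _ _ _ _) (fun l => measurable_pathDensity x₀ h p hh hp_meas l θ)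
    (fun l z _ _ hy => congrFun (pathDensity_dependsOn x₀ h p l z hy) θ)
    (fun l ω => integral_pathDensity_update x₀ h p hp_norm l ω θ) hij hB_dep (hD_dep i e)
    (hD_dep j e')
    (hD_zero i · e) (hD_zero j · e') hmeas hint

end StateSpaceModel

theorem stmt_17_general
    (n m : ℕ) (kk aa bb : ℕ → ℕ)
    (x₀ : Fin (kk 0) → ℝ)
    (h : (i : ℕ) → (Fin (kk i) → ℝ) → (Fin (aa i) → ℝ) → (Fin (bb i) → ℝ) →
      (Fin (kk (i + 1)) → ℝ))
    (hh : ∀ i, Measurable (fun q : (Fin (kk i) → ℝ) × (Fin (aa i) → ℝ) × (Fin (bb i) → ℝ) =>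
      h i q.1 q.2.1 q.2.2))
    (μ : ((i : Fin n) → (Fin (bb i.1) → ℝ)) → ℝ)
    (hμ1 : ∫ z, μ z = 1)
    (p : (i : ℕ) → (Fin (aa i) → ℝ) → (Fin (kk i) → ℝ) → (Fin (bb i) → ℝ) →
      (Fin m → ℝ) → ℝ)
    (hp_pos : ∀ i y xx z θ', 0 < p i y xx z θ')
    (hp_diff : ∀ i y xx z, Differentiable ℝ (p i y xx z))
    (hp_meas : ∀ i θ', Measurable
      (fun q : (Fin (aa i) → ℝ) × (Fin (kk i) → ℝ) × (Fin (bb i) → ℝ) =>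
        p i q.1 q.2.1 q.2.2 θ'))
    (hp_norm : ∀ i xx z θ', ∫ y, p i y xx z θ' = 1)
    (θ : Fin m → ℝ) (ε : ℝ) (hε : 0 < ε)
    (g : (i : ℕ) → (Fin (kk i) → ℝ) → (Fin (bb i) → ℝ) → (Fin (aa i) → ℝ) → ℝ)
    (hg_int : ∀ i xx z, Integrable (g i xx z))
    (hg_bd : ∀ i y xx z, ∀ θ' : Fin m → ℝ, dist θ' θ < ε →
      ‖fderiv ℝ (p i y xx z) θ'‖ ≤ g i xx z y)
    (ρ : SamplePath aa bb n → ℝ)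
    (hρ : ∀ ω, ρ ω =
      μ ω.1 * ∏ i : Fin n, p i.1 (ω.2 i) (states kk aa bb n x₀ h ω i.1) (ω.1 i) θ)
    (S : Fin n → SamplePath aa bb n → ((Fin m → ℝ) →L[ℝ] ℝ))
    (hS : ∀ i ω, S i ω = fderiv ℝ
      (fun t => Real.log (p i.1 (ω.2 i) (states kk aa bb n x₀ h ω i.1) (ω.1 i) t)) θ)
    (i j : Fin n) (hij : i ≠ j)
    (β : SamplePath aa bb n → ℝ)
    (hβ_meas : Measurable β)
    (hβ_dep : ∀ (ω ω' : SamplePath aa bb n), ω.1 = ω'.1 →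
      (∀ t : Fin n, t < i → ω.2 t = ω'.2 t) → β ω = β ω')
    (hint : Integrable (fun ω => ρ ω * (|β ω| * (‖S i ω‖ * ‖S j ω‖)))) :
    ∀ w : SamplePath aa bb n → ℝ, Measurable w → (∃ C, ∀ ω, |w ω| ≤ C) →
      (∀ (ω ω' : SamplePath aa bb n), ω.1 = ω'.1 →
        (∀ t : Fin n, t < j → ω.2 t = ω'.2 t) → w ω = w ω') →
      ∀ r c : Fin m,
        ∫ ω, ρ ω * (w ω * β ω *
          (S i ω (Pi.single r 1) * S j ω (Pi.single c 1))) = 0 := by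
  intro w hw_meas ⟨C, hC⟩ hw_dep r c
  obtain rfl : S = pathScore x₀ h p θ := funext fun l => funext (hS l)
  have hρ_eq : ∀ ω, ρ ω * (w ω * β ω *
      (pathScore x₀ h p θ i ω (Pi.single r 1) * pathScore x₀ h p θ j ω (Pi.single c 1))) =
      (∏ l, pathDensity x₀ h p l ω θ) * (μ ω.1 * (w ω * β ω) *
        pathScore x₀ h p θ i ω (Pi.single r 1) * pathScore x₀ h p θ j ω (Pi.single c 1)) :=
    fun ω => by rw [hρ]; simp only [pathDensity]; ring
  have hB_meas : AEStronglyMeasurable fun ω : SamplePath aa bb n => μ ω.1 * (w ω * β ω) :=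
    ((integrable_of_integral_eq_one hμ1).1.comp_quasiMeasurePreserving
      Measure.quasiMeasurePreserving_fst).mul (hw_meas.mul hβ_meas).aestronglyMeasurable
  have hB_dep : ∀ z, DependsOn (fun y => μ z * (w (z, y) * β (z, y))) (Set.Iio (max i j)) :=
    fun z y y' hy => by
      simp only
      rw [hw_dep (z, y) (z, y') rfl fun t ht => hy t (lt_max_of_lt_right ht),
        hβ_dep (z, y) (z, y') rfl fun t ht => hy t (lt_max_of_lt_left ht)]
  have hscore_meas := measurable_pathScore_apply (n := n) x₀ h p hh hp_pos hp_diff hp_meas θ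
  have hint' := integrable_mul_mul_apply_mul_apply (e := Pi.single r 1) (e' := Pi.single c 1) hint
    (by
      simp only [hρ_eq]
      exact (Finset.measurable_prod _ fun l _ =>
        measurable_pathDensity x₀ h p hh hp_meas l θ).aestronglyMeasurable.mul
        ((hB_meas.mul (hscore_meas i _).aestronglyMeasurable).mul
          (hscore_meas j _).aestronglyMeasurable))
    hC
  simp only [hρ_eq] at hint' ⊢
  exact integral_prod_pathDensity_mul_pathScore_mul_pathScore_eq_zero x₀ h p hh hp_pos hp_diff
    hp_meas hp_norm hε hg_int hg_bd hij hB_meas hB_dep _ _ hint'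

/-- **Lemma 4.2: cross terms between distinct score functions vanish conditionally on the
partial sample path.**  In the chapter-4 setup (joint density
`ρ ω = μ(z)·∏ p_i(y_i | x_{i-1}, z_i, θ)`, scores `S i ω = ∇_θ log p_i(y_i | x_{i-1}, z_i, θ)`),
let `i ≠ j`, let `β` be a bounded measurable function of `ξ_i = (z₁,…,z_n, y₁,…,y_{i-1})`
with `E[|β|·‖s_i‖·‖s_j‖] < ∞`.  Then for every bounded measurable function `w` of
`ξ_j = (z₁,…,z_n, y₁,…,y_{j-1})`, every entry `(r,c)` of the matrix
`E[w(ξ_j)·β(ξ_i)·s_i(θ)s_j(θ)^T]` vanishes; equivalently, the conditional expectation of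
`β(ξ_i)·s_i(θ)s_j(θ)^T` given `ξ_j` vanishes almost surely. -/
theorem stmt_17
    (n m : ℕ) (hn : 1 ≤ n) (kk aa bb : ℕ → ℕ)
    (x₀ : Fin (kk 0) → ℝ)
    (h : (i : ℕ) → (Fin (kk i) → ℝ) → (Fin (aa i) → ℝ) → (Fin (bb i) → ℝ) →
      (Fin (kk (i + 1)) → ℝ))
    (hh : ∀ i, Measurable (fun q : (Fin (kk i) → ℝ) × (Fin (aa i) → ℝ) × (Fin (bb i) → ℝ) =>
      h i q.1 q.2.1 q.2.2))
    (μ : ((i : Fin n) → (Fin (bb i.1) → ℝ)) → ℝ)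
    (hμ0 : ∀ z, 0 ≤ μ z) (hμ1 : ∫ z, μ z = 1)
    (p : (i : ℕ) → (Fin (aa i) → ℝ) → (Fin (kk i) → ℝ) → (Fin (bb i) → ℝ) →
      (Fin m → ℝ) → ℝ)
    (hp_pos : ∀ i y xx z θ', 0 < p i y xx z θ')
    (hp_diff : ∀ i y xx z, Differentiable ℝ (p i y xx z))
    (hp_meas : ∀ i θ', Measurable
      (fun q : (Fin (aa i) → ℝ) × (Fin (kk i) → ℝ) × (Fin (bb i) → ℝ) =>
        p i q.1 q.2.1 q.2.2 θ'))
    (hp_norm : ∀ i xx z θ', ∫ y, p i y xx z θ' = 1)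
    (θ : Fin m → ℝ) (ε : ℝ) (hε : 0 < ε)
    (g : (i : ℕ) → (Fin (kk i) → ℝ) → (Fin (bb i) → ℝ) → (Fin (aa i) → ℝ) → ℝ)
    (hg_int : ∀ i xx z, Integrable (g i xx z))
    (hg_bd : ∀ i y xx z, ∀ θ' : Fin m → ℝ, dist θ' θ < ε →
      ‖fderiv ℝ (p i y xx z) θ'‖ ≤ g i xx z y)
    (ρ : SamplePath aa bb n → ℝ)
    (hρ : ∀ ω, ρ ω =
      μ ω.1 * ∏ i : Fin n, p i.1 (ω.2 i) (states kk aa bb n x₀ h ω i.1) (ω.1 i) θ)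
    (S : Fin n → SamplePath aa bb n → ((Fin m → ℝ) →L[ℝ] ℝ))
    (hS : ∀ i ω, S i ω = fderiv ℝ
      (fun t => Real.log (p i.1 (ω.2 i) (states kk aa bb n x₀ h ω i.1) (ω.1 i) t)) θ)
    (i j : Fin n) (hij : i ≠ j)
    (β : SamplePath aa bb n → ℝ)
    (hβ_meas : Measurable β)
    (hβ_bd : ∃ C, ∀ ω, |β ω| ≤ C)
    (hβ_dep : ∀ (ω ω' : SamplePath aa bb n), ω.1 = ω'.1 →
      (∀ t : Fin n, t < i → ω.2 t = ω'.2 t) → β ω = β ω')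
    (hint : Integrable (fun ω => ρ ω * (|β ω| * (‖S i ω‖ * ‖S j ω‖)))) :
    ∀ w : SamplePath aa bb n → ℝ, Measurable w → (∃ C, ∀ ω, |w ω| ≤ C) →
      (∀ (ω ω' : SamplePath aa bb n), ω.1 = ω'.1 →
        (∀ t : Fin n, t < j → ω.2 t = ω'.2 t) → w ω = w ω') →
      ∀ r c : Fin m,
        ∫ ω, ρ ω * (w ω * β ω *
          (S i ω (Pi.single r 1) * S j ω (Pi.single c 1))) = 0 :=
  stmt_17_general n m kk aa bb x₀ h hh μ hμ1 p hp_pos hp_diff hp_meas hp_norm θ ε hε g hg_int hg_bd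
    ρ hρ S hS i j hij β hβ_meas hβ_dep hint
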